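/- Let H be a Hopf quasigroup over k, B a right H-comodule magma, h: H → B an anchor morphism, and (M, φ_M, ρ_M) a strong (H,B,h)-Hopf module. Define q_M(m) = φ_M(m_[0] ⊗ h(λ(m_[1]))) and the deformed action φ_M^ω(m ⊗ b) = φ_M(q_M(m_[0]) ⊗ (h(m_[1]) · b)). Then the deformed idempotent coincides with the original, i.e. φ_M^ω∘(id ⊗ (h∘λ))∘ρ_M = q_M; moreover the deformation is idempotent: (φ_M^ω)^ω = φ_M^ω. -/
import Mathlib


open TensorProduct

noncomputable section

namespace DoiHopf

variable (k : Type) [Field k]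
variable (H : Type) [AddCommGroup H] [Module k H]

/-- A Hopf quasigroup structure on `H`: a unital (not necessarily associative) magma and a
coassociative counital comonoid such that `eps` and `delta` are morphisms of unital magmas,
with an antipode `lam` satisfying the four Hopf quasigroup antipode identities. -/
structure IsHopfQuasigroup (mul : H ⊗[k] H →ₗ[k] H) (one : H)
    (eps : H →ₗ[k] k) (delta : H →ₗ[k] H ⊗[k] H) (lam : H →ₗ[k] H) : Prop where
  one_mul : ∀ x, mul (one ⊗ₜ[k] x) = x
  mul_one : ∀ x, mul (x ⊗ₜ[k] one) = x
  coassoc : (TensorProduct.assoc k H H H).toLinearMap ∘ₗ delta.rTensor H ∘ₗ delta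
      = delta.lTensor H ∘ₗ delta
  counit_left : ∀ x, (TensorProduct.lid k H) ((eps.rTensor H) (delta x)) = x
  counit_right : ∀ x, (TensorProduct.rid k H) ((eps.lTensor H) (delta x)) = x
  eps_mul : ∀ x y, eps (mul (x ⊗ₜ[k] y)) = eps x * eps y
  eps_one : eps one = 1
  delta_mul : delta ∘ₗ mul = (TensorProduct.map mul mul)
      ∘ₗ (TensorProduct.tensorTensorTensorComm k H H H H).toLinearMap
      ∘ₗ (TensorProduct.map delta delta)
  delta_one : delta one = one ⊗ₜ[k] one
  antipode_left₁ : mul ∘ₗ (TensorProduct.map lam mul)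
      ∘ₗ (TensorProduct.assoc k H H H).toLinearMap ∘ₗ delta.rTensor H
      = (TensorProduct.lid k H).toLinearMap ∘ₗ eps.rTensor H
  antipode_left₂ : mul ∘ₗ (TensorProduct.map (LinearMap.id : H →ₗ[k] H) (mul ∘ₗ lam.rTensor H))
      ∘ₗ (TensorProduct.assoc k H H H).toLinearMap ∘ₗ delta.rTensor H
      = (TensorProduct.lid k H).toLinearMap ∘ₗ eps.rTensor H
  antipode_right₁ : mul ∘ₗ (TensorProduct.map mul lam)
      ∘ₗ (TensorProduct.assoc k H H H).symm.toLinearMap ∘ₗ delta.lTensor H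
      = (TensorProduct.rid k H).toLinearMap ∘ₗ eps.lTensor H
  antipode_right₂ : mul ∘ₗ (TensorProduct.map (mul ∘ₗ lam.lTensor H) (LinearMap.id : H →ₗ[k] H))
      ∘ₗ (TensorProduct.assoc k H H H).symm.toLinearMap ∘ₗ delta.lTensor H
      = (TensorProduct.rid k H).toLinearMap ∘ₗ eps.lTensor H

/-- A right `H`-comodule magma structure on `B`: a unital magma which is a right `H`-comodule
whose coaction is multiplicative for the tensor product magma structure on `B ⊗ H` and
sends the unit to `1_B ⊗ 1_H`. -/
structure IsComoduleMagma (mul : H ⊗[k] H →ₗ[k] H) (one : H)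
    (eps : H →ₗ[k] k) (delta : H →ₗ[k] H ⊗[k] H)
    {B : Type} [AddCommGroup B] [Module k B]
    (mulB : B ⊗[k] B →ₗ[k] B) (oneB : B) (rho : B →ₗ[k] B ⊗[k] H) : Prop where
  oneB_mul : ∀ b, mulB (oneB ⊗ₜ[k] b) = b
  mul_oneB : ∀ b, mulB (b ⊗ₜ[k] oneB) = b
  counit : ∀ b, (TensorProduct.rid k B) ((eps.lTensor B) (rho b)) = b
  coassoc : rho.rTensor H ∘ₗ rho
      = (TensorProduct.assoc k B H H).symm.toLinearMap ∘ₗ delta.lTensor B ∘ₗ rho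
  mul_compat : rho ∘ₗ mulB = (TensorProduct.map mulB mul)
      ∘ₗ (TensorProduct.tensorTensorTensorComm k B H B H).toLinearMap
      ∘ₗ (TensorProduct.map rho rho)
  one_compat : rho oneB = oneB ⊗ₜ[k] one

/-- The generic "action against `f : H → B'` after the coaction" endomorphism; for
`f = h ∘ λ` this is the canonical idempotent `q` of the paper. -/
def act {M B' : Type} [AddCommGroup M] [Module k M] [AddCommGroup B'] [Module k B']
    (phi : M ⊗[k] B' →ₗ[k] M) (rho : M →ₗ[k] M ⊗[k] H) (f : H →ₗ[k] B') : M →ₗ[k] M :=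
  phi ∘ₗ f.lTensor M ∘ₗ rho

/-- An anchor morphism `h : H → B`: a multiplicative total integral (a morphism of unital
magmas and of right `H`-comodules) satisfying the two cancellation conditions (c1), (c2). -/
structure IsAnchor (mul : H ⊗[k] H →ₗ[k] H) (one : H)
    (eps : H →ₗ[k] k) (delta : H →ₗ[k] H ⊗[k] H) (lam : H →ₗ[k] H)
    {B : Type} [AddCommGroup B] [Module k B]
    (mulB : B ⊗[k] B →ₗ[k] B) (oneB : B) (rho : B →ₗ[k] B ⊗[k] H)
    (h : H →ₗ[k] B) : Prop where
  comod : rho ∘ₗ h = h.rTensor H ∘ₗ delta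
  unit : h one = oneB
  mul_morph : mulB ∘ₗ TensorProduct.map h h = h ∘ₗ mul
  c1 : mulB ∘ₗ (TensorProduct.map (mulB ∘ₗ h.lTensor B) (h ∘ₗ lam))
      ∘ₗ (TensorProduct.assoc k B H H).symm.toLinearMap ∘ₗ delta.lTensor B
      = (TensorProduct.rid k B).toLinearMap ∘ₗ eps.lTensor B
  c2 : mulB ∘ₗ (TensorProduct.map (mulB ∘ₗ (h ∘ₗ lam).lTensor B) h)
      ∘ₗ (TensorProduct.assoc k B H H).symm.toLinearMap ∘ₗ delta.lTensor B
      = (TensorProduct.rid k B).toLinearMap ∘ₗ eps.lTensor B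

/-- A strong `(H,B,h)`-Hopf module: a right `H`-comodule `M` with an action
`phiM : M ⊗ B → M` satisfying the axioms (d2-1)–(d2-5) of the paper (unit action,
restricted associativity over the coinvariants of `B`, Hopf compatibility, and the
two quasigroup cancellation laws involving `h` and the antipode). -/
structure IsStrongHopfModule (mul : H ⊗[k] H →ₗ[k] H) (one : H)
    (eps : H →ₗ[k] k) (delta : H →ₗ[k] H ⊗[k] H) (lam : H →ₗ[k] H)
    {B : Type} [AddCommGroup B] [Module k B]
    (mulB : B ⊗[k] B →ₗ[k] B) (oneB : B) (rhoB : B →ₗ[k] B ⊗[k] H)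
    (h : H →ₗ[k] B)
    {M : Type} [AddCommGroup M] [Module k M]
    (phiM : M ⊗[k] B →ₗ[k] M) (rhoM : M →ₗ[k] M ⊗[k] H) : Prop where
  counit : ∀ m, (TensorProduct.rid k M) ((eps.lTensor M) (rhoM m)) = m
  coassoc : rhoM.rTensor H ∘ₗ rhoM
      = (TensorProduct.assoc k M H H).symm.toLinearMap ∘ₗ delta.lTensor M ∘ₗ rhoM
  act_one : ∀ m, phiM (m ⊗ₜ[k] oneB) = m
  act_coinv : ∀ (m : M) (c b : B), rhoB c = c ⊗ₜ[k] one →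
      phiM (phiM (m ⊗ₜ[k] c) ⊗ₜ[k] b) = phiM (m ⊗ₜ[k] mulB (c ⊗ₜ[k] b))
  compat : rhoM ∘ₗ phiM = (TensorProduct.map phiM mul)
      ∘ₗ (TensorProduct.tensorTensorTensorComm k M H B H).toLinearMap
      ∘ₗ (TensorProduct.map rhoM rhoB)
  cancel₁ : phiM ∘ₗ (TensorProduct.map (phiM ∘ₗ h.lTensor M) (h ∘ₗ lam))
      ∘ₗ (TensorProduct.assoc k M H H).symm.toLinearMap ∘ₗ delta.lTensor M
      = (TensorProduct.rid k M).toLinearMap ∘ₗ eps.lTensor M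
  cancel₂ : phiM ∘ₗ (TensorProduct.map (phiM ∘ₗ (h ∘ₗ lam).lTensor M) h)
      ∘ₗ (TensorProduct.assoc k M H H).symm.toLinearMap ∘ₗ delta.lTensor M
      = (TensorProduct.rid k M).toLinearMap ∘ₗ eps.lTensor M

variable (B : Type) [AddCommGroup B] [Module k B]
variable (mul : H ⊗[k] H →ₗ[k] H) (one : H) (eps : H →ₗ[k] k)
variable (delta : H →ₗ[k] H ⊗[k] H) (lam : H →ₗ[k] H)
variable (mulB : B ⊗[k] B →ₗ[k] B) (oneB : B) (rho : B →ₗ[k] B ⊗[k] H)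
variable (h : H →ₗ[k] B)

variable (M : Type) [AddCommGroup M] [Module k M]
variable (phiM : M ⊗[k] B →ₗ[k] M) (rhoM : M →ₗ[k] M ⊗[k] H)

/-- The ω-deformation of an action `φ : M ⊗ B → M`:
`φ^ω(m ⊗ b) = φ(q_φ(m₍₀₎) ⊗ (h(m₍₁₎) · b))` where `q_φ(m) = φ(m₍₀₎ ⊗ h(λ(m₍₁₎)))`. -/
def deform (phi : M ⊗[k] B →ₗ[k] M) : M ⊗[k] B →ₗ[k] M :=
  phi ∘ₗ (TensorProduct.map (act k H phi rhoM (h ∘ₗ lam)) (mulB ∘ₗ h.rTensor B))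
    ∘ₗ (TensorProduct.assoc k M H B).toLinearMap ∘ₗ rhoM.rTensor B

lemma aux_A1 (hH : IsHopfQuasigroup k H mul one eps delta lam) :
    mul ∘ₗ lam.lTensor H ∘ₗ delta = LinearMap.toSpanSingleton k H one ∘ₗ eps := by
  ext y
  have aux : ∀ t : H ⊗[k] H,
      mul ((TensorProduct.map mul lam) ((TensorProduct.assoc k H H H).symm (one ⊗ₜ[k] t)))
        = mul (lam.lTensor H t) := by
    intro t
    induction t using TensorProduct.induction_on with
    | zero => simp
    | tmul a b => simp [hH.one_mul]
    | add s t hs ht => simp only [tmul_add, map_add, hs, ht]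
  have key := LinearMap.congr_fun hH.antipode_right₁ (one ⊗ₜ[k] y)
  simp only [LinearMap.comp_apply, LinearEquiv.coe_coe, LinearMap.lTensor_tmul,
    TensorProduct.rid_tmul] at key
  rw [aux] at key
  simpa using key

lemma aux_lam_one (hH : IsHopfQuasigroup k H mul one eps delta lam) :
    lam one = one := by
  have := LinearMap.congr_fun (aux_A1 k H mul one eps delta lam hH) one
  simp only [LinearMap.comp_apply, hH.delta_one, LinearMap.lTensor_tmul,
    LinearMap.toSpanSingleton_apply, hH.eps_one, one_smul] at this
  rw [hH.one_mul] at this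
  exact this

lemma aux_A3gen (hH : IsHopfQuasigroup k H mul one eps delta lam) (x : H) :
    (LinearMap.toSpanSingleton k H x ∘ₗ eps).rTensor H ∘ₗ delta
      = TensorProduct.mk k H H x := by
  ext y
  have aux : ∀ t : H ⊗[k] H,
      (LinearMap.toSpanSingleton k H x ∘ₗ eps).rTensor H t
        = x ⊗ₜ[k] (TensorProduct.lid k H ((eps.rTensor H) t)) := by
    intro t
    induction t using TensorProduct.induction_on with
    | zero => simp
    | tmul a b =>
        simp only [LinearMap.rTensor_tmul, LinearMap.comp_apply,
          LinearMap.toSpanSingleton_apply, LinearEquiv.coe_coe, TensorProduct.lid_tmul]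
        rw [TensorProduct.smul_tmul]
    | add s t hs ht => simp only [map_add, hs, ht, tmul_add]
  simp only [LinearMap.comp_apply, TensorProduct.mk_apply, aux, hH.counit_left]

lemma aux_ALd (hH : IsHopfQuasigroup k H mul one eps delta lam) (x : H) :
    (mul ∘ₗ TensorProduct.map lam (mul ∘ₗ (TensorProduct.mk k H H).flip x)) ∘ₗ delta
      = LinearMap.toSpanSingleton k H x ∘ₗ eps := by
  ext v
  have aux : ∀ t : H ⊗[k] H,
      mul ((TensorProduct.map lam mul) ((TensorProduct.assoc k H H H) (t ⊗ₜ[k] x)))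
        = mul ((TensorProduct.map lam (mul ∘ₗ (TensorProduct.mk k H H).flip x)) t) := by
    intro t
    induction t using TensorProduct.induction_on with
    | zero => simp
    | tmul p q => simp
    | add s t hs ht => simp only [add_tmul, map_add, hs, ht]
  have key := LinearMap.congr_fun hH.antipode_left₁ (v ⊗ₜ[k] x)
  simp only [LinearMap.comp_apply, LinearEquiv.coe_coe, LinearMap.rTensor_tmul,
    TensorProduct.lid_tmul] at key
  rw [aux] at key
  simpa using key

def mul2 : ((H ⊗[k] H) ⊗[k] (H ⊗[k] H)) →ₗ[k] H ⊗[k] H :=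
  TensorProduct.map mul mul ∘ₗ (TensorProduct.tensorTensorTensorComm k H H H H).toLinearMap

def Gam : H →ₗ[k] H ⊗[k] H :=
  (TensorProduct.comm k H H).toLinearMap ∘ₗ TensorProduct.map lam lam ∘ₗ delta

lemma aux_S2 (hH : IsHopfQuasigroup k H mul one eps delta lam) :
    ∀ T : H ⊗[k] H, mul2 k H mul (T ⊗ₜ[k] (one ⊗ₜ[k] one)) = T := by
  intro T
  induction T using TensorProduct.induction_on with
  | zero => simp
  | tmul u v => simp [mul2, hH.mul_one]
  | add s t hs ht => simp only [add_tmul, map_add, hs, ht]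

lemma aux_star1 (hH : IsHopfQuasigroup k H mul one eps delta lam) :
    mul2 k H mul ∘ₗ
      TensorProduct.map (Gam k H delta lam) (mul2 k H mul ∘ₗ delta.rTensor (H ⊗[k] H)) ∘ₗ
      (TensorProduct.assoc k H H (H ⊗[k] H)).toLinearMap ∘ₗ delta.rTensor (H ⊗[k] H)
      = (TensorProduct.lid k (H ⊗[k] H)).toLinearMap ∘ₗ eps.rTensor (H ⊗[k] H) := by
  apply TensorProduct.ext'
  intro hh X
  induction X using TensorProduct.induction_on with
  | zero => simp
  | add X₁ X₂ h1 h2 => simp only [tmul_add, map_add, h1, h2]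
  | tmul x y =>
    simp only [LinearMap.comp_apply, LinearEquiv.coe_coe, LinearMap.rTensor_tmul,
      TensorProduct.lid_tmul]
    set G : H ⊗[k] (H ⊗[k] H) →ₗ[k] H ⊗[k] H :=
      mul2 k H mul ∘ₗ delta.rTensor (H ⊗[k] H) with hG
    set c : H ⊗[k] H →ₗ[k] H ⊗[k] H :=
      (TensorProduct.comm k H H).toLinearMap ∘ₗ TensorProduct.map lam lam with hc
    set gX : H →ₗ[k] H ⊗[k] H :=
      G ∘ₗ (TensorProduct.mk k H (H ⊗[k] H)).flip (x ⊗ₜ[k] y) with hgX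
    set ALx : H ⊗[k] H →ₗ[k] H :=
      mul ∘ₗ TensorProduct.map lam (mul ∘ₗ (TensorProduct.mk k H H).flip x) with hALx
    set Ly : H ⊗[k] H →ₗ[k] H :=
      mul ∘ₗ TensorProduct.map lam (mul ∘ₗ (TensorProduct.mk k H H).flip y) with hLy
    set EE : H ⊗[k] (H ⊗[k] (H ⊗[k] H)) →ₗ[k] H ⊗[k] H :=
      TensorProduct.map ALx Ly
        ∘ₗ (TensorProduct.tensorTensorTensorComm k H H H H).toLinearMap
        ∘ₗ ((TensorProduct.comm k H H).toLinearMap.rTensor (H ⊗[k] H))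
        ∘ₗ (TensorProduct.assoc k H H (H ⊗[k] H)).symm.toLinearMap with hEE
    have s1 : ∀ t : H ⊗[k] H,
        mul2 k H mul ((TensorProduct.map (Gam k H delta lam) G)
          ((TensorProduct.assoc k H H (H ⊗[k] H)) (t ⊗ₜ[k] (x ⊗ₜ[k] y))))
        = mul2 k H mul ((TensorProduct.map c gX) (delta.rTensor H t)) := by
      intro t
      induction t using TensorProduct.induction_on with
      | zero => simp
      | tmul u v =>
          simp [hc, hgX, Gam, LinearMap.comp_apply]
      | add s t hs ht => simp only [add_tmul, map_add, hs, ht]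
    have s2b : ∀ (u a : H) (r : H ⊗[k] H),
        mul2 k H mul ((lam a ⊗ₜ[k] lam u) ⊗ₜ[k] (mul2 k H mul (r ⊗ₜ[k] (x ⊗ₜ[k] y))))
        = EE (u ⊗ₜ[k] (a ⊗ₜ[k] r)) := by
      intro u a r
      induction r using TensorProduct.induction_on with
      | zero => simp
      | tmul p w =>
          simp [hEE, hALx, hLy, mul2, LinearMap.comp_apply]
      | add s t hs ht => simp only [add_tmul, tmul_add, map_add, hs, ht]
    have s2 : ∀ t : H ⊗[k] H,
        mul2 k H mul ((TensorProduct.map c gX)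
          ((TensorProduct.assoc k H H H).symm (delta.lTensor H t)))
        = EE ((LinearMap.lTensor H (delta.lTensor H ∘ₗ delta)) t) := by
      intro t
      induction t using TensorProduct.induction_on with
      | zero => simp
      | tmul u v =>
          have s2a : ∀ s : H ⊗[k] H,
              mul2 k H mul ((TensorProduct.map c gX)
                ((TensorProduct.assoc k H H H).symm (u ⊗ₜ[k] s)))
              = EE (u ⊗ₜ[k] (delta.lTensor H s)) := by
            intro s
            induction s using TensorProduct.induction_on with
            | zero => simp
            | tmul a b =>
                have := s2b u a (delta b)
                simp only [LinearMap.lTensor_tmul, TensorProduct.assoc_symm_tmul,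
                  TensorProduct.map_tmul, hc, hgX, LinearMap.comp_apply,
                  LinearMap.flip_apply, TensorProduct.mk_apply, LinearEquiv.coe_coe,
                  TensorProduct.comm_tmul, hG, LinearMap.rTensor_tmul] at this ⊢
                exact this
            | add s t hs ht => simp only [tmul_add, map_add, hs, ht]
          simpa using s2a (delta v)
      | add s t hs ht => simp only [map_add, hs, ht]
    have s4b : ∀ (u c' : H) (r : H ⊗[k] H),
        EE (u ⊗ₜ[k] ((TensorProduct.assoc k H H H) (r ⊗ₜ[k] c')))
        = (ALx r) ⊗ₜ[k] (Ly (u ⊗ₜ[k] c')) := by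
      intro u c' r
      induction r using TensorProduct.induction_on with
      | zero => simp
      | tmul p w => simp [hEE, LinearMap.comp_apply]
      | add s t hs ht =>
          simp only [map_add, add_tmul, tmul_add, hs, ht]
    have s4 : ∀ t : H ⊗[k] H,
        EE ((LinearMap.lTensor H
          ((TensorProduct.assoc k H H H).toLinearMap ∘ₗ delta.rTensor H ∘ₗ delta)) t)
        = x ⊗ₜ[k] (Ly t) := by
      intro t
      induction t using TensorProduct.induction_on with
      | zero => simp
      | tmul u v =>
          have s4a : ∀ s : H ⊗[k] H,
              EE (u ⊗ₜ[k] ((TensorProduct.assoc k H H H) (delta.rTensor H s)))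
              = x ⊗ₜ[k] (Ly (u ⊗ₜ[k] (TensorProduct.lid k H (eps.rTensor H s)))) := by
            intro s
            induction s using TensorProduct.induction_on with
            | zero => simp
            | tmul g c' =>
                have h1 : delta.rTensor H (g ⊗ₜ[k] c') = delta g ⊗ₜ[k] c' := by simp
                rw [h1, s4b u c' (delta g)]
                have h2 : ALx (delta g) = eps g • x := by
                  rw [hALx]
                  simpa using LinearMap.congr_fun
                    (aux_ALd k H mul one eps delta lam hH x) g
                rw [h2]
                simp [TensorProduct.smul_tmul, TensorProduct.tmul_smul]
            | add s t hs ht =>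
                simp only [map_add, tmul_add, hs, ht]
          have := s4a (delta v)
          rw [hH.counit_left] at this
          simpa using this
      | add s t hs ht => simp only [map_add, tmul_add, hs, ht]
    -- main chain
    rw [s1 (delta hh)]
    have co := LinearMap.congr_fun hH.coassoc hh
    simp only [LinearMap.comp_apply, LinearEquiv.coe_coe] at co
    have co2 : delta.rTensor H (delta hh)
        = (TensorProduct.assoc k H H H).symm ((delta.lTensor H) (delta hh)) := by
      rw [← co, LinearEquiv.symm_apply_apply]
    rw [co2, s2 (delta hh), ← hH.coassoc, s4 (delta hh)]
    have h3 : Ly (delta hh) = eps hh • y := by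
      rw [hLy]
      simpa using LinearMap.congr_fun (aux_ALd k H mul one eps delta lam hH y) hh
    rw [h3, TensorProduct.tmul_smul]

lemma aux_anti (hH : IsHopfQuasigroup k H mul one eps delta lam) :
    delta ∘ₗ lam = Gam k H delta lam := by
  ext hh
  simp only [LinearMap.comp_apply]
  set Lmap : H ⊗[k] H →ₗ[k] H ⊗[k] H := delta ∘ₗ mul ∘ₗ lam.lTensor H with hLmap
  set Psi : (H ⊗[k] H) ⊗[k] H →ₗ[k] H ⊗[k] H :=
    mul2 k H mul ∘ₗ TensorProduct.map (Gam k H delta lam) Lmap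
      ∘ₗ (TensorProduct.assoc k H H H).toLinearMap with hPsi
  -- E2 : the lhs equals delta (lam hh) via star1
  have e2 : ∀ t : H ⊗[k] H,
      TensorProduct.lid k (H ⊗[k] H)
        (eps.rTensor (H ⊗[k] H) ((LinearMap.lTensor H (delta ∘ₗ lam)) t))
      = delta (lam (TensorProduct.lid k H (eps.rTensor H t))) := by
    intro t
    induction t using TensorProduct.induction_on with
    | zero => simp
    | tmul a b => simp
    | add s t hs ht => simp only [map_add, hs, ht]
  have eq1 := LinearMap.congr_fun (aux_star1 k H mul one eps delta lam hH)
    ((LinearMap.lTensor H (delta ∘ₗ lam)) (delta hh))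
  simp only [LinearMap.comp_apply, LinearEquiv.coe_coe] at eq1
  rw [e2 (delta hh), hH.counit_left] at eq1
  -- eq1 : mul2 (map Γ G (assoc (δ.rT (lT (δ∘λ) (δ hh))))) = delta (lam hh)
  rw [← eq1]
  -- E1 : compute the same expression to Gam hh
  have eh1b : ∀ (b : H) (r : H ⊗[k] H),
      mul2 k H mul ((TensorProduct.map (Gam k H delta lam)
          (mul2 k H mul ∘ₗ delta.rTensor (H ⊗[k] H)))
        ((TensorProduct.assoc k H H (H ⊗[k] H)) (r ⊗ₜ[k] (delta (lam b)))))
      = mul2 k H mul ((TensorProduct.map (Gam k H delta lam) Lmap)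
        ((TensorProduct.assoc k H H H) (r ⊗ₜ[k] b))) := by
    intro b r
    induction r using TensorProduct.induction_on with
    | zero => simp
    | tmul p q =>
        have dm := LinearMap.congr_fun hH.delta_mul (q ⊗ₜ[k] lam b)
        simp only [LinearMap.comp_apply, LinearEquiv.coe_coe, TensorProduct.map_tmul] at dm
        simp only [TensorProduct.assoc_tmul, TensorProduct.map_tmul, LinearMap.comp_apply,
          LinearMap.rTensor_tmul, hLmap, LinearMap.lTensor_tmul]
        rw [dm]
        rfl
    | add s t hs ht => simp only [add_tmul, map_add, hs, ht]
  have eh1 : ∀ t : H ⊗[k] H,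
      mul2 k H mul ((TensorProduct.map (Gam k H delta lam)
          (mul2 k H mul ∘ₗ delta.rTensor (H ⊗[k] H)))
        ((TensorProduct.assoc k H H (H ⊗[k] H))
          (delta.rTensor (H ⊗[k] H) ((LinearMap.lTensor H (delta ∘ₗ lam)) t))))
      = Psi (delta.rTensor H t) := by
    intro t
    induction t using TensorProduct.induction_on with
    | zero => simp
    | tmul a b =>
        simp only [LinearMap.lTensor_tmul, LinearMap.comp_apply, LinearMap.rTensor_tmul]
        rw [eh1b b (delta a)]
        simp [hPsi]
    | add s t hs ht => simp only [map_add, hs, ht]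
  rw [eh1 (delta hh)]
  have co := LinearMap.congr_fun hH.coassoc hh
  simp only [LinearMap.comp_apply, LinearEquiv.coe_coe] at co
  have co2 : delta.rTensor H (delta hh)
      = (TensorProduct.assoc k H H H).symm ((delta.lTensor H) (delta hh)) := by
    rw [← co, LinearEquiv.symm_apply_apply]
  rw [co2]
  have eh2a : ∀ (a : H) (s : H ⊗[k] H),
      Psi ((TensorProduct.assoc k H H H).symm (a ⊗ₜ[k] s))
      = mul2 k H mul ((Gam k H delta lam a) ⊗ₜ[k] (Lmap s)) := by
    intro a s
    induction s using TensorProduct.induction_on with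
    | zero => simp
    | tmul p w => simp [hPsi]
    | add s t hs ht => simp only [map_add, tmul_add, hs, ht]
  have eh2 : ∀ t : H ⊗[k] H,
      Psi ((TensorProduct.assoc k H H H).symm (delta.lTensor H t))
      = Gam k H delta lam (TensorProduct.rid k H (eps.lTensor H t)) := by
    intro t
    induction t using TensorProduct.induction_on with
    | zero => simp
    | tmul a b =>
        simp only [LinearMap.lTensor_tmul]
        rw [eh2a a (delta b)]
        have hA1 := LinearMap.congr_fun (aux_A1 k H mul one eps delta lam hH) b
        simp only [LinearMap.comp_apply, LinearMap.toSpanSingleton_apply] at hA1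
        have : Lmap (delta b) = eps b • (one ⊗ₜ[k] one) := by
          rw [hLmap]
          simp only [LinearMap.comp_apply, hA1, map_smul, hH.delta_one]
        rw [this, TensorProduct.tmul_smul, map_smul,
          aux_S2 k H mul one eps delta lam hH (Gam k H delta lam a)]
        simp [TensorProduct.rid_tmul]
    | add s t hs ht => simp only [map_add, hs, ht]
  rw [eh2 (delta hh), hH.counit_right]

lemma aux_P1 (hH : IsHopfQuasigroup k H mul one eps delta lam)
    (hB : IsComoduleMagma k H mul one eps delta mulB oneB rho)
    (hA : IsAnchor k H mul one eps delta lam mulB oneB rho h)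
    (hM : IsStrongHopfModule k H mul one eps delta lam mulB oneB rho h phiM rhoM) :
    rhoM ∘ₗ act k H phiM rhoM (h ∘ₗ lam)
      = (TensorProduct.mk k M H).flip one ∘ₗ act k H phiM rhoM (h ∘ₗ lam) := by
  ext m
  simp only [LinearMap.comp_apply, act, LinearMap.flip_apply, TensorProduct.mk_apply]
  set K' : H ⊗[k] H →ₗ[k] B ⊗[k] H :=
    h.rTensor H ∘ₗ (TensorProduct.comm k H H).toLinearMap ∘ₗ TensorProduct.map lam lam
    with hK'
  have p1 := LinearMap.congr_fun hM.compat ((h ∘ₗ lam).lTensor M (rhoM m))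
  simp only [LinearMap.comp_apply, LinearEquiv.coe_coe] at p1
  rw [p1]
  have p2 : ∀ u : M ⊗[k] H,
      (TensorProduct.map rhoM rho) ((h ∘ₗ lam).lTensor M u)
      = (TensorProduct.map (LinearMap.id : M ⊗[k] H →ₗ[k] M ⊗[k] H) K')
          ((LinearMap.lTensor (M ⊗[k] H) delta) (rhoM.rTensor H u)) := by
    intro u
    induction u using TensorProduct.induction_on with
    | zero => simp
    | tmul m' a =>
        have hcom := LinearMap.congr_fun hA.comod (lam a)
        simp only [LinearMap.comp_apply] at hcom
        have hanti := LinearMap.congr_fun (aux_anti k H mul one eps delta lam hH) a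
        simp only [LinearMap.comp_apply, Gam] at hanti
        simp only [LinearMap.lTensor_tmul, TensorProduct.map_tmul, LinearMap.comp_apply,
          LinearMap.rTensor_tmul, LinearMap.id_coe, id_eq, hK', LinearEquiv.coe_coe]
        rw [hcom, hanti]
        rfl
    | add s t hs ht => simp only [map_add, hs, ht]
  rw [p2 (rhoM m)]
  have com := LinearMap.congr_fun hM.coassoc m
  simp only [LinearMap.comp_apply, LinearEquiv.coe_coe] at com
  rw [com]
  have p5 : ∀ v : M ⊗[k] H,
      (TensorProduct.map phiM mul)
        ((TensorProduct.tensorTensorTensorComm k M H B H)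
          ((TensorProduct.map (LinearMap.id : M ⊗[k] H →ₗ[k] M ⊗[k] H) K')
            ((LinearMap.lTensor (M ⊗[k] H) delta)
              ((TensorProduct.assoc k M H H).symm ((delta.lTensor M) v)))))
      = (phiM ((h ∘ₗ lam).lTensor M v)) ⊗ₜ[k] one := by
    intro v
    induction v using TensorProduct.induction_on with
    | zero => simp
    | tmul m' a =>
        set W : H ⊗[k] (H ⊗[k] H) →ₗ[k] M ⊗[k] H :=
          TensorProduct.map (phiM ∘ₗ (TensorProduct.mk k M B m') ∘ₗ h ∘ₗ lam)
              (mul ∘ₗ lam.lTensor H)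
            ∘ₗ (TensorProduct.assoc k H H H).toLinearMap
            ∘ₗ (TensorProduct.comm k H H).toLinearMap.rTensor H
            ∘ₗ (TensorProduct.assoc k H H H).symm.toLinearMap
            ∘ₗ LinearMap.lTensor H (TensorProduct.comm k H H).toLinearMap with hW
        have p5b : ∀ (a₁ : H) (r : H ⊗[k] H),
            (TensorProduct.map phiM mul)
              ((TensorProduct.tensorTensorTensorComm k M H B H)
                ((m' ⊗ₜ[k] a₁) ⊗ₜ[k] (K' r)))
            = W (a₁ ⊗ₜ[k] r) := by
          intro a₁ r
          induction r using TensorProduct.induction_on with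
          | zero => simp
          | tmul p w => simp [hK', hW]
          | add s t hs ht => simp only [map_add, tmul_add, hs, ht]
        have p5a : ∀ s : H ⊗[k] H,
            (TensorProduct.map phiM mul)
              ((TensorProduct.tensorTensorTensorComm k M H B H)
                ((TensorProduct.map (LinearMap.id : M ⊗[k] H →ₗ[k] M ⊗[k] H) K')
                  ((LinearMap.lTensor (M ⊗[k] H) delta)
                    ((TensorProduct.assoc k M H H).symm (m' ⊗ₜ[k] s)))))
            = W (delta.lTensor H s) := by
          intro s
          induction s using TensorProduct.induction_on with
          | zero => simp
          | tmul a₁ a₂ =>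
              simp only [TensorProduct.assoc_symm_tmul, LinearMap.lTensor_tmul,
                TensorProduct.map_tmul, LinearMap.id_coe, id_eq]
              exact p5b a₁ (delta a₂)
          | add s t hs ht => simp only [tmul_add, map_add, hs, ht]
        have p5d : ∀ (c' : H) (r : H ⊗[k] H),
            W ((TensorProduct.assoc k H H H) (r ⊗ₜ[k] c'))
            = (phiM (m' ⊗ₜ[k] h (lam c'))) ⊗ₜ[k] (mul (lam.lTensor H r)) := by
          intro c' r
          induction r using TensorProduct.induction_on with
          | zero => simp
          | tmul p q => simp [hW]
          | add s t hs ht => simp only [add_tmul, map_add, tmul_add, hs, ht]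
        have p5c : ∀ t : H ⊗[k] H,
            W ((TensorProduct.assoc k H H H) (delta.rTensor H t))
            = (phiM (m' ⊗ₜ[k] h (lam (TensorProduct.lid k H (eps.rTensor H t)))))
                ⊗ₜ[k] one := by
          intro t
          induction t using TensorProduct.induction_on with
          | zero => simp
          | tmul g c' =>
              simp only [LinearMap.rTensor_tmul]
              rw [p5d c' (delta g)]
              have hA1 := LinearMap.congr_fun (aux_A1 k H mul one eps delta lam hH) g
              simp only [LinearMap.comp_apply, LinearMap.toSpanSingleton_apply] at hA1
              rw [hA1]
              simp only [TensorProduct.lid_tmul, LinearMap.rTensor_tmul, map_smul,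
                TensorProduct.tmul_smul, TensorProduct.smul_tmul']
              congr 1
              rw [← TensorProduct.smul_tmul', map_smul]
          | add s t hs ht => simp only [map_add, tmul_add, add_tmul, hs, ht]
        rw [show (delta.lTensor M) (m' ⊗ₜ[k] a) = m' ⊗ₜ[k] delta a from rfl]
        rw [p5a (delta a)]
        have coH := LinearMap.congr_fun hH.coassoc a
        simp only [LinearMap.comp_apply, LinearEquiv.coe_coe] at coH
        rw [← coH, p5c (delta a), hH.counit_left]
        simp
    | add s t hs ht => simp only [map_add, add_tmul, hs, ht]
  exact p5 (rhoM m)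

lemma aux_P2 (hH : IsHopfQuasigroup k H mul one eps delta lam)
    (hB : IsComoduleMagma k H mul one eps delta mulB oneB rho)
    (hA : IsAnchor k H mul one eps delta lam mulB oneB rho h)
    (hM : IsStrongHopfModule k H mul one eps delta lam mulB oneB rho h phiM rhoM) :
    act k H phiM rhoM (h ∘ₗ lam) ∘ₗ act k H phiM rhoM (h ∘ₗ lam)
      = act k H phiM rhoM (h ∘ₗ lam) := by
  ext m
  have hp1 := LinearMap.congr_fun
    (aux_P1 k H B mul one eps delta lam mulB oneB rho h M phiM rhoM hH hB hA hM) m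
  simp only [LinearMap.comp_apply, LinearMap.flip_apply, TensorProduct.mk_apply] at hp1
  simp only [LinearMap.comp_apply]
  conv_lhs => rw [show (act k H phiM rhoM (h ∘ₗ lam))
      ((act k H phiM rhoM (h ∘ₗ lam)) m)
    = phiM ((h ∘ₗ lam).lTensor M (rhoM ((act k H phiM rhoM (h ∘ₗ lam)) m))) from rfl]
  rw [hp1]
  simp only [LinearMap.lTensor_tmul, LinearMap.comp_apply,
    aux_lam_one k H mul one eps delta lam hH, hA.unit, hM.act_one]

lemma aux_goal1 (hH : IsHopfQuasigroup k H mul one eps delta lam)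
    (hB : IsComoduleMagma k H mul one eps delta mulB oneB rho)
    (hA : IsAnchor k H mul one eps delta lam mulB oneB rho h)
    (hM : IsStrongHopfModule k H mul one eps delta lam mulB oneB rho h phiM rhoM) :
    (deform k H B lam mulB h M rhoM phiM) ∘ₗ (h ∘ₗ lam).lTensor M ∘ₗ rhoM
        = act k H phiM rhoM (h ∘ₗ lam) := by
  have unf : ∀ (u : M ⊗[k] B),
      deform k H B lam mulB h M rhoM phiM u
      = phiM ((TensorProduct.map (act k H phiM rhoM (h ∘ₗ lam)) (mulB ∘ₗ h.rTensor B))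
          ((TensorProduct.assoc k M H B) (rhoM.rTensor B u))) := by
    intro u; rfl
  ext m
  simp only [LinearMap.comp_apply]
  rw [unf]
  have g1a : ∀ v : M ⊗[k] H,
      (rhoM.rTensor B) ((h ∘ₗ lam).lTensor M v)
      = (LinearMap.lTensor (M ⊗[k] H) (h ∘ₗ lam)) (rhoM.rTensor H v) := by
    intro v
    induction v using TensorProduct.induction_on with
    | zero => simp
    | tmul m' a => simp
    | add s t hs ht => simp only [map_add, hs, ht]
  rw [g1a (rhoM m)]
  have com := LinearMap.congr_fun hM.coassoc m
  simp only [LinearMap.comp_apply, LinearEquiv.coe_coe] at com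
  rw [com]
  have g1c : ∀ (m' : M) (s : H ⊗[k] H),
      phiM ((TensorProduct.map (act k H phiM rhoM (h ∘ₗ lam)) (mulB ∘ₗ h.rTensor B))
        ((TensorProduct.assoc k M H B)
          ((LinearMap.lTensor (M ⊗[k] H) (h ∘ₗ lam))
            ((TensorProduct.assoc k M H H).symm (m' ⊗ₜ[k] s)))))
      = phiM ((act k H phiM rhoM (h ∘ₗ lam) m') ⊗ₜ[k] h (mul (lam.lTensor H s))) := by
    intro m' s
    induction s using TensorProduct.induction_on with
    | zero => simp
    | tmul a₁ a₂ =>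
        have hm := LinearMap.congr_fun hA.mul_morph (a₁ ⊗ₜ[k] lam a₂)
        simp only [LinearMap.comp_apply, TensorProduct.map_tmul] at hm
        simp only [TensorProduct.assoc_symm_tmul, LinearMap.lTensor_tmul,
          LinearMap.comp_apply, TensorProduct.assoc_tmul, TensorProduct.map_tmul,
          LinearMap.rTensor_tmul]
        rw [hm]
    | add s t hs ht => simp only [tmul_add, map_add, hs, ht]
  have g1b : ∀ v : M ⊗[k] H,
      phiM ((TensorProduct.map (act k H phiM rhoM (h ∘ₗ lam)) (mulB ∘ₗ h.rTensor B))
        ((TensorProduct.assoc k M H B)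
          ((LinearMap.lTensor (M ⊗[k] H) (h ∘ₗ lam))
            ((TensorProduct.assoc k M H H).symm ((delta.lTensor M) v)))))
      = act k H phiM rhoM (h ∘ₗ lam) ((TensorProduct.rid k M) ((eps.lTensor M) v)) := by
    intro v
    induction v using TensorProduct.induction_on with
    | zero => simp
    | tmul m' a =>
        rw [show (delta.lTensor M) (m' ⊗ₜ[k] a) = m' ⊗ₜ[k] delta a from rfl,
          g1c m' (delta a)]
        have hA1 := LinearMap.congr_fun (aux_A1 k H mul one eps delta lam hH) a
        simp only [LinearMap.comp_apply, LinearMap.toSpanSingleton_apply] at hA1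
        rw [hA1]
        simp only [map_smul, hA.unit, TensorProduct.tmul_smul, LinearMap.lTensor_tmul,
          TensorProduct.rid_tmul, hM.act_one]
    | add s t hs ht => simp only [map_add, hs, ht]
  rw [g1b (rhoM m), hM.counit m]

/-- For a strong `(H,B,h)`-Hopf module `M`, the deformed action
`φ_M^ω(m ⊗ b) = φ_M(q_M(m₍₀₎) ⊗ h(m₍₁₎)·b)` has the same canonical idempotent as `φ_M`
(`φ_M^ω ∘ (id ⊗ (h∘λ)) ∘ ρ_M = q_M`), and the deformation is idempotent:
`(φ_M^ω)^ω = φ_M^ω`. -/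
theorem deformation_idempotent
    (hH : IsHopfQuasigroup k H mul one eps delta lam)
    (hB : IsComoduleMagma k H mul one eps delta mulB oneB rho)
    (hA : IsAnchor k H mul one eps delta lam mulB oneB rho h)
    (hM : IsStrongHopfModule k H mul one eps delta lam mulB oneB rho h phiM rhoM) :
    (deform k H B lam mulB h M rhoM phiM) ∘ₗ (h ∘ₗ lam).lTensor M ∘ₗ rhoM
        = act k H phiM rhoM (h ∘ₗ lam) ∧
    deform k H B lam mulB h M rhoM
        (deform k H B lam mulB h M rhoM phiM)
      = deform k H B lam mulB h M rhoM phiM := by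
  have G1 := aux_goal1 k H B mul one eps delta lam mulB oneB rho h M phiM rhoM hH hB hA hM
  refine ⟨G1, ?_⟩
  have hact : act k H (deform k H B lam mulB h M rhoM phiM) rhoM (h ∘ₗ lam)
      = act k H phiM rhoM (h ∘ₗ lam) := G1
  have unf : ∀ (phi : M ⊗[k] B →ₗ[k] M) (u : M ⊗[k] B),
      deform k H B lam mulB h M rhoM phi u
      = phi ((TensorProduct.map (act k H phi rhoM (h ∘ₗ lam)) (mulB ∘ₗ h.rTensor B))
          ((TensorProduct.assoc k M H B) (rhoM.rTensor B u))) := by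
    intro phi u; rfl
  have claim2 : ∀ (m'' : M) (c : B),
      deform k H B lam mulB h M rhoM phiM
          ((act k H phiM rhoM (h ∘ₗ lam) m'') ⊗ₜ[k] c)
      = phiM ((act k H phiM rhoM (h ∘ₗ lam) m'') ⊗ₜ[k] c) := by
    intro m'' c
    rw [unf]
    have hp1 := LinearMap.congr_fun
      (aux_P1 k H B mul one eps delta lam mulB oneB rho h M phiM rhoM hH hB hA hM) m''
    simp only [LinearMap.comp_apply, LinearMap.flip_apply, TensorProduct.mk_apply] at hp1
    have hr : rhoM.rTensor B ((act k H phiM rhoM (h ∘ₗ lam) m'') ⊗ₜ[k] c)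
        = (rhoM (act k H phiM rhoM (h ∘ₗ lam) m'')) ⊗ₜ[k] c := by simp
    rw [hr, hp1]
    have hp2 := LinearMap.congr_fun
      (aux_P2 k H B mul one eps delta lam mulB oneB rho h M phiM rhoM hH hB hA hM) m''
    simp only [LinearMap.comp_apply] at hp2
    simp only [TensorProduct.assoc_tmul, TensorProduct.map_tmul, LinearMap.comp_apply,
      LinearMap.rTensor_tmul, hp2, hA.unit, hB.oneB_mul]
  have key : ∀ (w : M ⊗[k] H) (b : B),
      deform k H B lam mulB h M rhoM phiM
        ((TensorProduct.map (act k H phiM rhoM (h ∘ₗ lam)) (mulB ∘ₗ h.rTensor B))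
          ((TensorProduct.assoc k M H B) (w ⊗ₜ[k] b)))
      = phiM ((TensorProduct.map (act k H phiM rhoM (h ∘ₗ lam)) (mulB ∘ₗ h.rTensor B))
          ((TensorProduct.assoc k M H B) (w ⊗ₜ[k] b))) := by
    intro w b
    induction w using TensorProduct.induction_on with
    | zero => simp
    | tmul m' a =>
        simp only [TensorProduct.assoc_tmul, TensorProduct.map_tmul]
        exact claim2 m' _
    | add s t hs ht => simp only [add_tmul, map_add, hs, ht]
  apply TensorProduct.ext'
  intro m b
  rw [unf, unf, hact]
  have hr : rhoM.rTensor B (m ⊗ₜ[k] b) = (rhoM m) ⊗ₜ[k] b := by simp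
  rw [hr]
  exact key (rhoM m) b
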